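/- arXiv:2110.11142 — 2 statements merged into one kernel-verified Lean document; each statement's English description precedes it below -/
import Mathlib

section
/- For all natural numbers L ≥ 2 and N ≥ 1, the following identity holds in ℝ: Σ_{i=1}^{N} Σ_{j=1}^{L} Σ_{k=1}^{L^{i-1}} Σ_{l=1}^{L^{i-1}} L^{k} = (L² − L²·L^{N})/(L−1)² + (1/(L−1)) · Σ_{i=1}^{N} L^{i+1} · L^{L^{i-1}}. -/
/-- Closed form for the total number of comparisons `S_GIFS` of the deterministic GIFS
algorithm with worst-case linear search. -/
theorem S_GIFS_closed_form (L N : ℕ) (hL : 2 ≤ L) (hN : 1 ≤ N) :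
    ∑ i ∈ Finset.Icc 1 N, ∑ j ∈ Finset.Icc 1 L, ∑ k ∈ Finset.Icc 1 (L ^ (i - 1)),
        ∑ l ∈ Finset.Icc 1 (L ^ (i - 1)), (L : ℝ) ^ k
      = ((L : ℝ) ^ 2 - (L : ℝ) ^ 2 * (L : ℝ) ^ N) / ((L : ℝ) - 1) ^ 2
        + (1 / ((L : ℝ) - 1))
          * ∑ i ∈ Finset.Icc 1 N, (L : ℝ) ^ (i + 1) * (L : ℝ) ^ (L ^ (i - 1)) := by
  have hL1 : (1 : ℝ) < (L : ℝ) := by exact_mod_cast hL.trans_lt' one_lt_two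
  have hne1 : (L : ℝ) ≠ 1 := ne_of_gt hL1
  have h0 : (L : ℝ) - 1 ≠ 0 := sub_ne_zero.mpr hne1
  have key : ∀ i ∈ Finset.Icc 1 N,
      (∑ j ∈ Finset.Icc 1 L, ∑ k ∈ Finset.Icc 1 (L ^ (i - 1)),
        ∑ l ∈ Finset.Icc 1 (L ^ (i - 1)), (L : ℝ) ^ k)
      = (1 / ((L : ℝ) - 1)) * ((L : ℝ) ^ (i + 1) * (L : ℝ) ^ (L ^ (i - 1))
          - (L : ℝ) ^ (i + 1)) := by
    intro i hi
    obtain ⟨m, rfl⟩ : ∃ m, i = m + 1 := ⟨i - 1, (Nat.succ_pred_eq_of_pos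
      (Finset.mem_Icc.mp hi).1).symm⟩
    have hg : ∑ k ∈ Finset.Icc 1 (L ^ m), (L : ℝ) ^ k
        = ((L : ℝ) ^ (L ^ m + 1) - (L : ℝ)) / ((L : ℝ) - 1) := by
      rw [← Finset.Ico_add_one_right_eq_Icc, geom_sum_Ico hne1 (show 1 ≤ L ^ m + 1 from Nat.le_succ_of_le
        (Nat.one_le_iff_ne_zero.mpr (pow_ne_zero m (by omega : L ≠ 0)))), pow_one]
    simp only [Nat.add_sub_cancel, Finset.sum_const, Nat.card_Icc, nsmul_eq_mul]
    rw [← Finset.mul_sum, hg]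
    push_cast
    field_simp
    ring
  rw [Finset.sum_congr rfl key]
  have hgeo : ∑ i ∈ Finset.Icc 1 N, (L : ℝ) ^ (i + 1)
      = ((L : ℝ) ^ (N + 1) - (L : ℝ)) / ((L : ℝ) - 1) * (L : ℝ) := by
    have : ∑ i ∈ Finset.Icc 1 N, (L : ℝ) ^ (i + 1)
        = (∑ i ∈ Finset.Icc 1 N, (L : ℝ) ^ i) * (L : ℝ) := by
      rw [Finset.sum_mul]; exact Finset.sum_congr rfl fun i _ => (pow_succ _ _)
    rw [this, ← Finset.Ico_add_one_right_eq_Icc, geom_sum_Ico hne1 (by omega), pow_one]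
  rw [Finset.sum_congr rfl (fun i _ => mul_sub (1 / ((L : ℝ) - 1)) _ _),
    Finset.sum_sub_distrib, ← Finset.mul_sum, ← Finset.mul_sum, hgeo]
  field_simp
  ring
end

section
/- Fix a natural number L ≥ 2. Define S_IFSq(N) = 64·(L^{N+1} − L)/(L − 1) and S_IFS(N) = −N·L²/(L−1) + (L²/(L−1)) · Σ_{i=1}^{N} L^{L^{i-1}}. Then S_IFSq(N) = O(L^N) as N → ∞, and S_IFSq(N)/S_IFS(N) → 0 as N → ∞; in particular S_IFSq(N) is eventually strictly smaller than S_IFS(N). -/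
open Filter

/-- Total comparison count of the deterministic IFS algorithm with quadtree search,
bucket capacity `64`. -/
noncomputable def SIFSq (L N : ℕ) : ℝ :=
  64 * ((L : ℝ) ^ (N + 1) - (L : ℝ)) / ((L : ℝ) - 1)

/-- Total comparison count of the deterministic IFS algorithm with worst-case linear
search. -/
noncomputable def SIFS (L N : ℕ) : ℝ :=
  -(N : ℝ) * (L : ℝ) ^ 2 / ((L : ℝ) - 1)
    + ((L : ℝ) ^ 2 / ((L : ℝ) - 1)) * ∑ i ∈ Finset.Icc 1 N, (L : ℝ) ^ (L ^ (i - 1))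

/-!
`S_IFSq(N) ≤ 64 L · L^N`, while `S_IFS(N) = L²/(L-1) · ∑_{i=1}^N (L^{L^{i-1}} - 1)` is at least
half its last summand `L^{L^{N-1}}`. Since `M = o(L^M)` and `L^N ≤ L · M` for `M = L^{N-1}`,
this gives `S_IFSq = o(S_IFS)`, and both the limit of the ratio and the eventual inequality
follow.
-/

open Asymptotics

lemma SIFSq_nonneg {L : ℕ} (hL : 1 ≤ L) (N : ℕ) : 0 ≤ SIFSq L N := by
  have hL' : (1 : ℝ) ≤ L := by exact_mod_cast hL
  have hpow : (L : ℝ) ≤ (L : ℝ) ^ (N + 1) := le_self_pow₀ hL' N.succ_ne_zero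
  unfold SIFSq
  apply div_nonneg <;> linarith

lemma SIFSq_le {L : ℕ} (hL : 2 ≤ L) (N : ℕ) : SIFSq L N ≤ 64 * L * (L : ℝ) ^ N := by
  have hL' : (2 : ℝ) ≤ L := by exact_mod_cast hL
  have hpow : 0 ≤ (L : ℝ) * (L : ℝ) ^ N := by positivity
  unfold SIFSq
  rw [div_le_iff₀ (by linarith), pow_succ']
  nlinarith [mul_nonneg hpow (sub_nonneg.2 hL')]

lemma SIFSq_isBigO {L : ℕ} (hL : 2 ≤ L) :
    (fun N : ℕ => SIFSq L N) =O[atTop] (fun N : ℕ => (L : ℝ) ^ N) :=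
  isBigO_of_le' _ fun N => by
    rw [Real.norm_of_nonneg (SIFSq_nonneg (by omega) N),
      Real.norm_of_nonneg (by positivity)]
    exact SIFSq_le hL N

lemma SIFS_eq_mul_sum (L N : ℕ) :
    SIFS L N =
      (L : ℝ) ^ 2 / ((L : ℝ) - 1) * ∑ i ∈ Finset.Icc 1 N, ((L : ℝ) ^ (L ^ (i - 1)) - 1) := by
  rw [Finset.sum_sub_distrib, Finset.sum_const, Nat.card_Icc, SIFS]
  simp only [add_tsub_cancel_right, nsmul_eq_mul, mul_one]
  ring

lemma pow_pow_pred_le_two_mul_SIFS {L N : ℕ} (hL : 2 ≤ L) (hN : 1 ≤ N) :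
    (L : ℝ) ^ (L ^ (N - 1)) ≤ 2 * SIFS L N := by
  have hL' : (2 : ℝ) ≤ L := by exact_mod_cast hL
  have htwo_le : ∀ i : ℕ, (2 : ℝ) ≤ (L : ℝ) ^ (L ^ i) := fun i =>
    hL'.trans (le_self_pow₀ (by linarith) (by positivity))
  have hlast : (L : ℝ) ^ (L ^ (N - 1)) - 1 ≤ ∑ i ∈ Finset.Icc 1 N, ((L : ℝ) ^ (L ^ (i - 1)) - 1) :=
    Finset.single_le_sum (f := fun i => (L : ℝ) ^ (L ^ (i - 1)) - 1)
      (fun i _ => by linarith [htwo_le (i - 1)]) (Finset.mem_Icc.2 ⟨hN, le_rfl⟩)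
  have hfactor : 1 ≤ (L : ℝ) ^ 2 / ((L : ℝ) - 1) := by
    rw [le_div_iff₀ (by linarith)]
    nlinarith
  rw [SIFS_eq_mul_sum]
  nlinarith [htwo_le (N - 1)]

lemma pow_isLittleO_SIFS {L : ℕ} (hL : 2 ≤ L) :
    (fun N : ℕ => (L : ℝ) ^ N) =o[atTop] (fun N : ℕ => SIFS L N) := by
  have hL' : (1 : ℝ) < L := by exact_mod_cast hL
  have hpred : (fun N : ℕ => (L : ℝ) ^ N) =O[atTop] (fun N : ℕ => (L : ℝ) ^ (N - 1)) :=
    isBigO_of_le' (c := L) _ fun N => by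
      rw [Real.norm_of_nonneg (by positivity), Real.norm_of_nonneg (by positivity), ← pow_succ']
      exact pow_le_pow_right₀ hL'.le (by omega)
  have hexp : Tendsto (fun N : ℕ => L ^ (N - 1)) atTop atTop :=
    (tendsto_pow_atTop_atTop_of_one_lt hL).comp (tendsto_sub_atTop_nat 1)
  have hgrowth :
      (fun N : ℕ => (L : ℝ) ^ (N - 1)) =o[atTop] (fun N : ℕ => (L : ℝ) ^ (L ^ (N - 1))) := by
    simpa [Function.comp_def] using
      (isLittleO_pow_const_const_pow_of_one_lt (R := ℝ) 1 hL').comp_tendsto hexp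
  have hSIFS : (fun N : ℕ => (L : ℝ) ^ (L ^ (N - 1))) =O[atTop] (fun N : ℕ => SIFS L N) :=
    IsBigO.of_bound 2 <| (eventually_ge_atTop 1).mono fun N hN => by
      rw [Real.norm_of_nonneg (by positivity)]
      exact (pow_pow_pred_le_two_mul_SIFS hL hN).trans
        (mul_le_mul_of_nonneg_left (Real.le_norm_self _) zero_le_two)
  exact hpred.trans_isLittleO (hgrowth.trans_isBigO hSIFS)

/-- `S_IFSq(N) = O(L^N)`; moreover `S_IFSq(N)/S_IFS(N) → 0`, so `S_IFSq` is eventually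
strictly smaller than `S_IFS`. -/
theorem SIFSq_bigO_and_lt_SIFS (L : ℕ) (hL : 2 ≤ L) :
    (fun N : ℕ => SIFSq L N) =O[atTop] (fun N : ℕ => (L : ℝ) ^ N) ∧
    Tendsto (fun N : ℕ => SIFSq L N / SIFS L N) atTop (nhds 0) ∧
    ∀ᶠ N : ℕ in atTop, SIFSq L N < SIFS L N := by
  have hratio : Tendsto (fun N : ℕ => SIFSq L N / SIFS L N) atTop (nhds 0) :=
    ((SIFSq_isBigO hL).trans_isLittleO (pow_isLittleO_SIFS hL)).tendsto_div_nhds_zero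
  refine ⟨SIFSq_isBigO hL, hratio, ?_⟩
  filter_upwards [eventually_ge_atTop 1, hratio.eventually_lt_const zero_lt_one] with N hN hlt
  have hpos : 0 < SIFS L N := by
    have hlower := pow_pow_pred_le_two_mul_SIFS hL hN
    have hpow_pos : (0 : ℝ) < (L : ℝ) ^ (L ^ (N - 1)) := by positivity
    linarith
  exact (div_lt_one hpos).mp hlt
end
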